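/- arXiv:0704.1431 — 2 statements merged into one kernel-verified Lean document; each statement's English description precedes it below -/
import Mathlib

section
/- Let G be a finite simple graph and let φ assign to each ordered pair (u₁,u₂) of adjacent vertices of G a permutation φ(u₁,u₂) of {1,…,n} with φ(u₂,u₁) = φ(u₁,u₂)⁻¹. Let G^φ be the n-fold covering graph of G: its vertex set is V(G)×{1,…,n}, and (u₁,k) is adjacent to (u₂,l) iff u₁ and u₂ are adjacent in G and l = φ(u₁,u₂)(k). Let Γ be a subgroup of the symmetric group S_n containing all values of φ, let ρ₁ be the trivial one-dimensional representation of Γ and ρ₂, …, ρ_ℓ group homomorphisms from Γ to the invertible complex f_i×f_i matrices, let m₁ = 1 and m₂, …, m_ℓ be nonnegative integers with Σᵢ mᵢfᵢ = n, and suppose there is an invertible complex n×n matrix M such that for every γ ∈ Γ, M⁻¹P(γ)M = ⊕_{i=1}^{ℓ} (I_{mᵢ} ⊗ ρᵢ(γ)). Then for all complex λ, μ: F_{G^φ}(λ,μ) = F_G(λ,μ) · ∏_{i=2}^{ℓ} det[ I_{fᵢ} ⊗ (λ·I_{V(G)} + μ·D(G)) − Σ_{γ∈Γ} ρᵢ(γ)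 ⊗ A(G_{φ,γ}) ]^{mᵢ}. -/
open Matrix BigOperators Kronecker
open scoped Classical

noncomputable section

variable {α β : Type*}

def adjM [Fintype α] (G : SimpleGraph α) : Matrix α α ℂ :=
  Matrix.of fun u v => if G.Adj u v then (1 : ℂ) else 0

def degM [Fintype α] (G : SimpleGraph α) : Matrix α α ℂ :=
  Matrix.diagonal fun v => ((G.neighborSet v).ncard : ℂ)

def Fpoly [Fintype α] (G : SimpleGraph α) (lam mu : ℂ) : ℂ :=
  (lam • (1 : Matrix α α ℂ) - (adjM G - mu • degM G)).det

def permM (γ : Equiv.Perm β) : Matrix β β ℂ :=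
  Matrix.of fun v w => if γ v = w then (1 : ℂ) else 0

def voltM [Fintype α] (G : SimpleGraph α) (φ : α → α → Equiv.Perm β) (γ : Equiv.Perm β) :
    Matrix α α ℂ :=
  Matrix.of fun u₁ u₂ => if G.Adj u₁ u₂ ∧ φ u₁ u₂ = γ then (1 : ℂ) else 0

def autPerm (F : SimpleGraph β) : Subgroup (Equiv.Perm β) where
  carrier := {γ | ∀ a b, F.Adj (γ a) (γ b) ↔ F.Adj a b}
  one_mem' := by intro a b; simp
  mul_mem' := by intro γ δ hγ hδ a b; simp [Equiv.Perm.mul_apply, hγ _ _, hδ _ _]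
  inv_mem' := by intro γ hγ a b; simpa using (hγ (γ⁻¹ a) (γ⁻¹ b)).symm

def bundle (G : SimpleGraph α) (F : SimpleGraph β) (φ : α → α → Equiv.Perm β)
    (hsym : ∀ u₁ u₂, G.Adj u₁ u₂ → φ u₂ u₁ = (φ u₁ u₂)⁻¹) : SimpleGraph (β × α) where
  Adj p q := (G.Adj p.2 q.2 ∧ q.1 = φ p.2 q.2 p.1) ∨ (p.2 = q.2 ∧ F.Adj p.1 q.1)
  symm := by
    constructor
    rintro ⟨v₁, u₁⟩ ⟨v₂, u₂⟩ hadj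
    dsimp only at hadj ⊢
    rcases hadj with ⟨h, rfl⟩ | ⟨rfl, h⟩
    · left
      refine ⟨h.symm, ?_⟩
      rw [hsym _ _ h]
      simp
    · right
      exact ⟨rfl, h.symm⟩
  loopless := by
    constructor
    rintro ⟨v, u⟩ hadj
    dsimp only at hadj
    rcases hadj with ⟨h, _⟩ | ⟨_, h⟩
    · exact G.irrefl h
    · exact F.irrefl h

def dsum [Fintype α] (B : β → Matrix α α ℂ) : Matrix (β × α) (β × α) ℂ :=
  Matrix.of fun p q => if p.1 = q.1 then B p.1 p.2 q.2 else 0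

def bigE {ℓ : ℕ} {f m : Fin ℓ → ℕ} (e : β ≃ Σ i : Fin ℓ, Fin (m i) × Fin (f i)) (α : Type*) :
    β × α ≃ Σ i : Fin ℓ, Fin (m i) × (Fin (f i) × α) :=
  (e.prodCongr (Equiv.refl α)).trans
    ((Equiv.sigmaProdDistrib _ _).trans (Equiv.sigmaCongrRight fun _ => Equiv.prodAssoc _ _ _))



/-!
The covering graph has adjacency matrix `∑ γ, P(γ) ⊗ A(G_{φ,γ})` and degree matrix `I ⊗ D(G)`, so
`λI - (A(G^φ) - μD(G^φ)) = I ⊗ (λI + μD(G)) - ∑ γ, P(γ) ⊗ A(G_{φ,γ})`. Conjugating by `M ⊗ I`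
turns every `P(γ)` into `⊕ᵢ I_{mᵢ} ⊗ ρᵢ(γ)`; after regrouping the coordinates the matrix is block
diagonal with blocks `I_{mᵢ} ⊗ (I_{fᵢ} ⊗ (λI + μD(G)) - ∑ γ, ρᵢ(γ) ⊗ A(G_{φ,γ}))`, whose determinants
are the factors of the product. For the trivial representation the block is `λI - (A(G) - μD(G))`,
because the `A(G_{φ,γ})` sum to `A(G)`.
-/
namespace Matrix

variable {R : Type*} [CommRing R]

theorem kronecker_sub {l m p q : Type*} (A : Matrix l m R) (B C : Matrix p q R) :
    A ⊗ₖ (B - C) = A ⊗ₖ B - A ⊗ₖ C :=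
  map_sub (kroneckerBilinear (R := R) (α := R) A) B C

theorem kronecker_sum {l m p q ι : Type*} (s : Finset ι) (A : Matrix l m R)
    (B : ι → Matrix p q R) : A ⊗ₖ (∑ γ ∈ s, B γ) = ∑ γ ∈ s, A ⊗ₖ B γ :=
  map_sum (kroneckerBilinear (R := R) (α := R) A) B s

theorem blockDiagonal'_sum {o ι : Type*} [DecidableEq o] {σ τ : o → Type*} (s : Finset ι)
    (F : ι → ∀ i, Matrix (σ i) (τ i) R) :
    (blockDiagonal' fun i => ∑ γ ∈ s, F γ i) = ∑ γ ∈ s, blockDiagonal' (F γ) := by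
  rw [← Finset.sum_fn]
  exact map_sum (blockDiagonal'AddMonoidHom σ τ R) F s

theorem det_blockDiagonal' {o : Type*} [Fintype o] [LinearOrder o] {σ : o → Type*}
    [∀ i, Fintype (σ i)] [∀ i, DecidableEq (σ i)] (N : ∀ i, Matrix (σ i) (σ i) R) :
    (blockDiagonal' N).det = ∏ i, (N i).det := by
  rw [(blockTriangular_blockDiagonal' N).det_fintype]
  refine Finset.prod_congr rfl fun k _ => ?_
  let e : σ k ≃ {a : Σ i, σ i // a.1 = k} :=
    { toFun := fun x => ⟨⟨k, x⟩, rfl⟩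
      invFun := fun a => cast (congrArg σ a.2) a.1.2
      left_inv := fun _ => rfl
      right_inv := by rintro ⟨⟨i, x⟩, rfl⟩; rfl }
  have : (blockDiagonal' N).toSquareBlock Sigma.fst k = reindex e e (N k) := by
    ext ⟨⟨i, x⟩, hi⟩ ⟨⟨j, y⟩, hj⟩
    dsimp only at hi hj
    subst hi hj
    simp [toSquareBlock_def, e]
  rw [this, det_reindex_self]

theorem det_conj_kronecker_one [Fintype β] [DecidableEq β] [Fintype α]
    [DecidableEq α] {M : Matrix β β R} (hM : IsUnit M.det) (X : Matrix (β × α) (β × α) R) :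
    ((M⁻¹ ⊗ₖ (1 : Matrix α α R)) * X * (M ⊗ₖ 1)).det = X.det := by
  have hM1 : IsUnit (M ⊗ₖ (1 : Matrix α α R)) := by
    rw [isUnit_iff_isUnit_det, det_kronecker, det_one, one_pow, mul_one]
    exact hM.pow _
  simpa only [inv_kronecker, inv_one] using det_conj' hM1 X

end Matrix

theorem reindex_kronecker_eq_blockDiagonal' {R : Type*} [CommRing R] {ℓ : ℕ}
    {f m : Fin ℓ → ℕ} (e : β ≃ Σ i, Fin (m i) × Fin (f i)) {N : Matrix β β R}
    {C : ∀ i, Matrix (Fin (f i)) (Fin (f i)) R}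
    (h : reindex e e N = blockDiagonal' fun i => 1 ⊗ₖ C i) (A : Matrix α α R) :
    reindex (bigE e α) (bigE e α) (N ⊗ₖ A) = blockDiagonal' fun i => 1 ⊗ₖ (C i ⊗ₖ A) := by
  ext ⟨i, j, s, a⟩ ⟨i', j', s', a'⟩
  have hN := congr_fun (congr_fun h ⟨i, (j, s)⟩) ⟨i', (j', s')⟩
  simp only [reindex_apply, submatrix_apply] at hN
  simp only [reindex_apply, submatrix_apply]
  change N (e.symm ⟨i, (j, s)⟩) (e.symm ⟨i', (j', s')⟩) * A a a' = _
  rw [hN]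
  by_cases hi : i = i'
  · subst hi
    simp only [blockDiagonal'_apply_eq, kronecker_apply]
    ring
  · rw [blockDiagonal'_apply_ne _ _ _ hi, blockDiagonal'_apply_ne _ _ _ hi, zero_mul]

theorem det_one_kronecker_sub_sum_kronecker {R ι : Type*} [CommRing R] [Fintype ι] [Fintype α]
    [DecidableEq α] [Fintype β] [DecidableEq β] {ℓ : ℕ} {f m : Fin ℓ → ℕ}
    (e : β ≃ Σ i, Fin (m i) × Fin (f i)) {M : Matrix β β R} (hM : IsUnit M.det)
    {P : ι → Matrix β β R} {C : ∀ i, ι → Matrix (Fin (f i)) (Fin (f i)) R}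
    (hP : ∀ γ, reindex e e (M⁻¹ * P γ * M) = blockDiagonal' fun i => 1 ⊗ₖ C i γ)
    (B : Matrix α α R) (A : ι → Matrix α α R) :
    (1 ⊗ₖ B - ∑ γ, P γ ⊗ₖ A γ).det = ∏ i, (1 ⊗ₖ B - ∑ γ, C i γ ⊗ₖ A γ).det ^ m i := by
  have hconj : (M⁻¹ ⊗ₖ 1) * (1 ⊗ₖ B - ∑ γ, P γ ⊗ₖ A γ) * (M ⊗ₖ 1)
      = 1 ⊗ₖ B - ∑ γ, (M⁻¹ * P γ * M) ⊗ₖ A γ := by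
    simp only [Matrix.mul_sub, Matrix.sub_mul, Matrix.mul_sum, Matrix.sum_mul,
      ← mul_kronecker_mul, Matrix.mul_one, Matrix.one_mul, nonsing_inv_mul M hM]
  have hone : reindex e e (1 : Matrix β β R) = blockDiagonal' fun i => 1 ⊗ₖ 1 := by
    simp only [reindex_apply, submatrix_one_equiv, one_kronecker_one]
    exact blockDiagonal'_one.symm
  have hblock : reindex (bigE e α) (bigE e α) (1 ⊗ₖ B - ∑ γ, (M⁻¹ * P γ * M) ⊗ₖ A γ)
      = blockDiagonal' fun i => 1 ⊗ₖ (1 ⊗ₖ B - ∑ γ, C i γ ⊗ₖ A γ) := by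
    rw [← coe_reindexLinearEquiv R R, map_sub, map_sum, coe_reindexLinearEquiv,
      reindex_kronecker_eq_blockDiagonal' e hone]
    simp only [reindex_kronecker_eq_blockDiagonal' e (hP _), kronecker_sub, kronecker_sum]
    rw [← blockDiagonal'_sum, ← blockDiagonal'_sub]
    rfl
  rw [← det_conj_kronecker_one hM, hconj, ← det_reindex_self (bigE e α), hblock,
    det_blockDiagonal']
  simp only [det_kronecker, det_one, one_pow, one_mul, Fintype.card_fin]

theorem fpoly_eq_det [Fintype α] (G : SimpleGraph α) (lam μ : ℂ) :
    Fpoly G lam μ = (lam • 1 + μ • degM G - adjM G).det := by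
  rw [Fpoly]
  congr 1
  abel

section Covering

variable (G : SimpleGraph α) (φ : α → α → Equiv.Perm β)
  (hsym : ∀ u₁ u₂, G.Adj u₁ u₂ → φ u₂ u₁ = (φ u₁ u₂)⁻¹)

theorem neighborSet_bundle_bot (k : β) (u : α) :
    (bundle G ⊥ φ hsym).neighborSet (k, u) = (fun v => (φ u v k, v)) '' G.neighborSet u := by
  ext ⟨l, v⟩
  simp [bundle, eq_comm]

variable [Fintype α]

theorem sum_mul_voltM_apply {Γ : Subgroup (Equiv.Perm β)} [Fintype Γ]
    (hφΓ : ∀ u₁ u₂, G.Adj u₁ u₂ → φ u₁ u₂ ∈ Γ) (g : Equiv.Perm β → ℂ) (u v : α) :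
    ∑ γ : Γ, g γ * voltM G φ γ u v = if G.Adj u v then g (φ u v) else 0 := by
  by_cases h : G.Adj u v
  · rw [if_pos h, Finset.sum_eq_single ⟨φ u v, hφΓ u v h⟩]
    · simp [voltM, h]
    · rintro γ - hγ
      simp only [voltM, of_apply, h, true_and, mul_ite, mul_one, mul_zero, ite_eq_right_iff]
      exact fun hφ => absurd (Subtype.ext hφ) hγ.symm
    · simp
  · simp [voltM, h]

theorem sum_voltM {Γ : Subgroup (Equiv.Perm β)} [Fintype Γ]
    (hφΓ : ∀ u₁ u₂, G.Adj u₁ u₂ → φ u₁ u₂ ∈ Γ) : ∑ γ : Γ, voltM G φ γ = adjM G := by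
  ext u v
  simpa [Matrix.sum_apply, adjM] using sum_mul_voltM_apply G φ hφΓ 1 u v

variable [Fintype β] [DecidableEq β]

theorem adjM_bundle_bot {Γ : Subgroup (Equiv.Perm β)} [Fintype Γ]
    (hφΓ : ∀ u₁ u₂, G.Adj u₁ u₂ → φ u₁ u₂ ∈ Γ) :
    adjM (bundle G ⊥ φ hsym) = ∑ γ : Γ, permM (γ : Equiv.Perm β) ⊗ₖ voltM G φ γ := by
  ext ⟨k, u⟩ ⟨l, v⟩
  rw [Matrix.sum_apply]
  simp only [kronecker_apply]
  rw [sum_mul_voltM_apply G φ hφΓ (fun γ => permM γ k l)]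
  simp [adjM, bundle, permM, eq_comm, ite_and]

theorem degM_bundle_bot : degM (bundle G ⊥ φ hsym) = (1 : Matrix β β ℂ) ⊗ₖ degM G := by
  rw [degM, degM, ← diagonal_one, diagonal_kronecker_diagonal]
  congr 1
  · exact Subsingleton.elim _ _
  ext ⟨k, u⟩
  rw [neighborSet_bundle_bot, Set.ncard_image_of_injective _ fun _ _ h => congrArg Prod.snd h,
    one_mul]

theorem fpoly_bundle_bot {Γ : Subgroup (Equiv.Perm β)} [Fintype Γ]
    (hφΓ : ∀ u₁ u₂, G.Adj u₁ u₂ → φ u₁ u₂ ∈ Γ) (lam μ : ℂ) :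
    Fpoly (bundle G ⊥ φ hsym) lam μ = ((1 : Matrix β β ℂ) ⊗ₖ (lam • 1 + μ • degM G)
      - ∑ γ : Γ, permM (γ : Equiv.Perm β) ⊗ₖ voltM G φ γ).det := by
  rw [fpoly_eq_det, adjM_bundle_bot G φ hsym hφΓ, degM_bundle_bot, kronecker_add, kronecker_smul,
    kronecker_smul, one_kronecker_one]
  -- `Fpoly` uses the classical `DecidableEq` instance on `β × α`, `one_kronecker_one` the product one
  congr!

end Covering

theorem genCharPoly_of_covering_general
    {α : Type*} [Fintype α] (G : SimpleGraph α) (n : ℕ)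
    (φ : α → α → Equiv.Perm (Fin n))
    (hsym : ∀ u₁ u₂, G.Adj u₁ u₂ → φ u₂ u₁ = (φ u₁ u₂)⁻¹)
    (Γ : Subgroup (Equiv.Perm (Fin n)))
    (hφΓ : ∀ u₁ u₂, G.Adj u₁ u₂ → φ u₁ u₂ ∈ Γ)
    (ℓ : ℕ) (hℓ : 0 < ℓ)
    (f m : Fin ℓ → ℕ) (ρ : ∀ i : Fin ℓ, Γ →* GL (Fin (f i)) ℂ)
    (hf1 : f ⟨0, hℓ⟩ = 1) (hm1 : m ⟨0, hℓ⟩ = 1)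
    (hρ1 : ∀ γ : Γ, (ρ ⟨0, hℓ⟩ γ
        : Matrix (Fin (f ⟨0, hℓ⟩)) (Fin (f ⟨0, hℓ⟩)) ℂ) = 1)
    (e : Fin n ≃ Σ i : Fin ℓ, Fin (m i) × Fin (f i))
    (M : Matrix (Fin n) (Fin n) ℂ) (hM : IsUnit M.det)
    (hP : ∀ γ : Γ, Matrix.reindex e e (M⁻¹ * permM (γ : Equiv.Perm (Fin n)) * M)
        = Matrix.blockDiagonal' fun i =>
            (1 : Matrix (Fin (m i)) (Fin (m i)) ℂ)
              ⊗ₖ (ρ i γ : Matrix (Fin (f i)) (Fin (f i)) ℂ))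
    (lam μ : ℂ) :
    Fpoly (bundle G (⊥ : SimpleGraph (Fin n)) φ hsym) lam μ
      = Fpoly G lam μ *
          ∏ i ∈ Finset.univ.erase ⟨0, hℓ⟩,
            (Matrix.det
              ((1 : Matrix (Fin (f i)) (Fin (f i)) ℂ)
                  ⊗ₖ (lam • (1 : Matrix α α ℂ) + μ • degM G)
                - ∑ γ : Γ, (ρ i γ : Matrix (Fin (f i)) (Fin (f i)) ℂ)
                    ⊗ₖ voltM G φ (γ : Equiv.Perm (Fin n)))) ^ (m i) := by
  rw [fpoly_bundle_bot G φ hsym hφΓ, det_one_kronecker_sub_sum_kronecker e hM hP,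
    ← Finset.mul_prod_erase _ _ (Finset.mem_univ ⟨0, hℓ⟩), hm1, pow_one]
  congr 1
  simp only [hρ1, ← kronecker_sum, ← kronecker_sub, sum_voltM G φ hφΓ, det_kronecker, det_one,
    one_pow, one_mul, Fintype.card_fin, hf1, pow_one, fpoly_eq_det]

theorem genCharPoly_of_covering
    {α : Type*} [Fintype α] (G : SimpleGraph α) (n : ℕ)
    (φ : α → α → Equiv.Perm (Fin n))
    (hsym : ∀ u₁ u₂, G.Adj u₁ u₂ → φ u₂ u₁ = (φ u₁ u₂)⁻¹)
    (Γ : Subgroup (Equiv.Perm (Fin n)))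
    (hφΓ : ∀ u₁ u₂, G.Adj u₁ u₂ → φ u₁ u₂ ∈ Γ)
    (ℓ : ℕ) (hℓ : 0 < ℓ)
    (f m : Fin ℓ → ℕ) (ρ : ∀ i : Fin ℓ, Γ →* GL (Fin (f i)) ℂ)
    (hf1 : f ⟨0, hℓ⟩ = 1) (hm1 : m ⟨0, hℓ⟩ = 1)
    (hρ1 : ∀ γ : Γ, (ρ ⟨0, hℓ⟩ γ
        : Matrix (Fin (f ⟨0, hℓ⟩)) (Fin (f ⟨0, hℓ⟩)) ℂ) = 1)
    (hsum : ∑ i, m i * f i = n)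
    (e : Fin n ≃ Σ i : Fin ℓ, Fin (m i) × Fin (f i))
    (M : Matrix (Fin n) (Fin n) ℂ) (hM : IsUnit M.det)
    (hP : ∀ γ : Γ, Matrix.reindex e e (M⁻¹ * permM (γ : Equiv.Perm (Fin n)) * M)
        = Matrix.blockDiagonal' fun i =>
            (1 : Matrix (Fin (m i)) (Fin (m i)) ℂ)
              ⊗ₖ (ρ i γ : Matrix (Fin (f i)) (Fin (f i)) ℂ))
    (lam μ : ℂ) :
    Fpoly (bundle G (⊥ : SimpleGraph (Fin n)) φ hsym) lam μ
      = Fpoly G lam μ *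
          ∏ i ∈ Finset.univ.erase ⟨0, hℓ⟩,
            (Matrix.det
              ((1 : Matrix (Fin (f i)) (Fin (f i)) ℂ)
                  ⊗ₖ (lam • (1 : Matrix α α ℂ) + μ • degM G)
                - ∑ γ : Γ, (ρ i γ : Matrix (Fin (f i)) (Fin (f i)) ℂ)
                    ⊗ₖ voltM G φ (γ : Equiv.Perm (Fin n)))) ^ (m i) :=
  genCharPoly_of_covering_general G n φ hsym Γ hφΓ ℓ hℓ f m ρ hf1 hm1 hρ1 e M hM hP lam μ

end
end

section
/- Let G be a finite simple graph and F a finite simple graph that is regular of degree r. Let φ be a voltage assignment on G whose values lie in an abelian subgroup Γ of Aut(F), and suppose M is an invertible complex V(F)×V(F) matrix such that M⁻¹P(γ)M is diagonal for every γ ∈ Γ, with diagonal entries λ_{(γ,1)}, …, λ_{(γ,ν_F)} (ν_F = |V(F)|), and M⁻¹A(F)M is diagonal with diagonal entries λ_{(F,1)}, …, λ_{(F,ν_F)}. For each i, let A_i denote the V(G)×V(G) complex matrix whose (u₁,u₂)-entry is λ_{(φ(u₁,u₂),i)} if u₁ and u₂ are adjacent in G and 0 otherwise. Then for all complex λ,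 μ: F_{G×^φF}(λ,μ) = ∏_{i=1}^{ν_F} det( (λ + rμ − λ_{(F,i)})·I_{V(G)} − (A_i − μ·D(G)) ). -/
open Matrix BigOperators Kronecker
open scoped Classical

noncomputable section

variable {α β : Type*}

/-
Conjugating by `M ⊗ I` acts on each `V(F) × V(F)` block of `λI - (A - μD)` of the bundle
separately. Every block is a combination of `I`, `A(F)` and `P(φ(u₁, u₂))` (regularity of `F`
makes the degree blocks scalar), so each conjugated block is diagonal. A matrix all of whose
blocks are diagonal is, after swapping the two factors of the index set, block diagonal with
`i`-th block formed by the `i`-th diagonal entries, and its determinant is the product of theirs.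
-/

section BlockConjugation

variable {R : Type*} [CommRing R] [Fintype α] [Fintype β]

theorem submatrix_mul_kronecker_one (X : Matrix (β × α) (β × α) R) (N : Matrix β β R)
    (u₁ u₂ : α) :
    (X * (N ⊗ₖ (1 : Matrix α α R))).submatrix (·, u₁) (·, u₂)
      = X.submatrix (·, u₁) (·, u₂) * N := by
  ext v₁ v₂
  simp [mul_apply, Fintype.sum_prod_type, kroneckerMap_apply, one_apply]

theorem kronecker_one_mul_submatrix (X : Matrix (β × α) (β × α) R) (N : Matrix β β R)
    (u₁ u₂ : α) :
    ((N ⊗ₖ (1 : Matrix α α R)) * X).submatrix (·, u₁) (·, u₂)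
      = N * X.submatrix (·, u₁) (·, u₂) := by
  ext v₁ v₂
  simp [mul_apply, Fintype.sum_prod_type, kroneckerMap_apply, one_apply]

theorem det_eq_prod_det_of_submatrix_eq_diagonal (Y : Matrix (β × α) (β × α) R)
    (b : β → Matrix α α R)
    (hY : ∀ u₁ u₂, Y.submatrix (·, u₁) (·, u₂) = diagonal fun v => b v u₁ u₂) :
    Y.det = ∏ v, (b v).det := by
  have hblock : Y = reindex (Equiv.prodComm α β) (Equiv.prodComm α β)
      (blockDiagonal b) := by
    ext ⟨v₁, u₁⟩ ⟨v₂, u₂⟩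
    have h := congr_fun₂ (hY u₁ u₂) v₁ v₂
    simp only [submatrix_apply] at h
    simp [h, diagonal_apply, blockDiagonal_apply]
  rw [hblock, det_reindex_self, det_blockDiagonal]

theorem det_eq_prod_det_of_conj_submatrix_eq_diagonal (X : Matrix (β × α) (β × α) R)
    (M : Matrix β β R) (hM : IsUnit M.det) (b : β → Matrix α α R)
    (hX : ∀ u₁ u₂, M⁻¹ * X.submatrix (·, u₁) (·, u₂) * M = diagonal fun v => b v u₁ u₂) :
    X.det = ∏ v, (b v).det := by
  have hC : IsUnit (M ⊗ₖ (1 : Matrix α α R)) := by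
    rw [isUnit_iff_isUnit_det, det_kronecker, det_one, one_pow, mul_one]
    exact hM.pow _
  rw [← det_conj' hC X]
  refine det_eq_prod_det_of_submatrix_eq_diagonal _ b fun u₁ u₂ => ?_
  rw [inv_kronecker, inv_one, submatrix_mul_kronecker_one, kronecker_one_mul_submatrix, hX]

end BlockConjugation

theorem one_submatrix_prod {R : Type*} [Zero R] [One R] (u₁ u₂ : α) :
    (1 : Matrix (β × α) (β × α) R).submatrix (·, u₁) (·, u₂) = if u₁ = u₂ then 1 else 0 := by
  ext v₁ v₂
  by_cases hu : u₁ = u₂ <;> simp [hu, one_apply]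

section Bundle

variable (G : SimpleGraph α) (F : SimpleGraph β) (φ : α → α → Equiv.Perm β)
  (hsym : ∀ u₁ u₂, G.Adj u₁ u₂ → φ u₂ u₁ = (φ u₁ u₂)⁻¹)

theorem neighborSet_bundle (v : β) (u : α) :
    (bundle G F φ hsym).neighborSet (v, u)
      = (fun u' => (φ u u' v, u')) '' G.neighborSet u ∪ (·, u) '' F.neighborSet v := by
  ext ⟨w, u'⟩
  simp only [SimpleGraph.mem_neighborSet, bundle, Set.mem_union, Set.mem_image, Prod.mk.injEq]
  constructor
  · rintro (⟨hG, rfl⟩ | ⟨rfl, hF⟩)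
    exacts [Or.inl ⟨u', hG, rfl, rfl⟩, Or.inr ⟨w, hF, rfl, rfl⟩]
  · rintro (⟨u', hG, rfl, rfl⟩ | ⟨w, hF, rfl, rfl⟩)
    exacts [Or.inl ⟨hG, rfl⟩, Or.inr ⟨rfl, hF⟩]

theorem ncard_neighborSet_bundle [Finite α] [Finite β] (v : β) (u : α) :
    ((bundle G F φ hsym).neighborSet (v, u)).ncard
      = (G.neighborSet u).ncard + (F.neighborSet v).ncard := by
  have hdisj : Disjoint ((fun u' => (φ u u' v, u')) '' G.neighborSet u)
      ((·, u) '' F.neighborSet v) := by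
    rw [Set.disjoint_left]
    rintro _ ⟨u', hG, rfl⟩ ⟨w, -, hw⟩
    exact G.ne_of_adj hG (congrArg Prod.snd hw)
  rw [neighborSet_bundle, Set.ncard_union_eq hdisj,
    Set.ncard_image_of_injective _ fun _ _ h => congrArg Prod.snd h,
    Set.ncard_image_of_injective _ fun _ _ h => congrArg Prod.fst h]

theorem degM_bundle_submatrix [Fintype α] [Fintype β] (u₁ u₂ : α) :
    (degM (bundle G F φ hsym)).submatrix (·, u₁) (·, u₂)
      = if u₁ = u₂ then
          diagonal fun v => ((G.neighborSet u₁).ncard + (F.neighborSet v).ncard : ℂ)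
        else 0 := by
  ext v₁ v₂
  by_cases hu : u₁ = u₂ <;> simp [degM, diagonal_apply, ncard_neighborSet_bundle, hu]

theorem adjM_bundle_submatrix [Fintype α] [Fintype β] (u₁ u₂ : α) :
    (adjM (bundle G F φ hsym)).submatrix (·, u₁) (·, u₂)
      = (if u₁ = u₂ then adjM F else 0) + (if G.Adj u₁ u₂ then permM (φ u₁ u₂) else 0) := by
  ext v₁ v₂
  by_cases hu : u₁ = u₂
  · subst hu
    simp [adjM, bundle]
  · by_cases hG : G.Adj u₁ u₂ <;> simp [adjM, permM, bundle, hu, hG, eq_comm]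

theorem conj_submatrix_charMatrix_bundle [Fintype α] [Fintype β] (r : ℕ)
    (hreg : ∀ v, (F.neighborSet v).ncard = r) (M : Matrix β β ℂ) (hM : IsUnit M.det)
    (d : Equiv.Perm β → β → ℂ)
    (hPd : ∀ u₁ u₂, G.Adj u₁ u₂ → M⁻¹ * permM (φ u₁ u₂) * M = diagonal (d (φ u₁ u₂)))
    (dF : β → ℂ) (hAd : M⁻¹ * adjM F * M = diagonal dF) (lam μ : ℂ) (u₁ u₂ : α) :
    M⁻¹ * (lam • (1 : Matrix (β × α) (β × α) ℂ)
        - (adjM (bundle G F φ hsym) - μ • degM (bundle G F φ hsym))).submatrix (·, u₁) (·, u₂) * M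
      = diagonal fun v => ((lam + (r : ℂ) * μ - dF v) • (1 : Matrix α α ℂ)
          - ((of fun u₁ u₂ => if G.Adj u₁ u₂ then d (φ u₁ u₂) v else 0) - μ • degM G)) u₁ u₂ := by
  simp only [submatrix_sub, submatrix_smul, Pi.sub_apply, Pi.smul_apply]
  rw [adjM_bundle_submatrix, degM_bundle_submatrix, one_submatrix_prod]
  by_cases hu : u₁ = u₂
  · subst hu
    simp only [hreg, if_true, G.irrefl, if_false, add_zero]
    rw [← smul_one_eq_diagonal]
    simp only [Matrix.mul_sub, Matrix.sub_mul, Matrix.mul_smul, Matrix.smul_mul, Matrix.mul_one,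
      nonsing_inv_mul M hM, hAd]
    ext v₁ v₂
    by_cases hv : v₁ = v₂
    · simp [hv, degM]
      ring
    · simp [hv]
  · by_cases hG : G.Adj u₁ u₂
    · simp [hu, hG, hPd _ _ hG, degM]
    · simp [hu, hG, degM]

end Bundle

theorem genCharPoly_of_abelian_bundle_general
    {α β : Type*} [Fintype α] [Fintype β]
    (G : SimpleGraph α) (F : SimpleGraph β)
    (r : ℕ) (hreg : ∀ v, (F.neighborSet v).ncard = r)
    (φ : α → α → Equiv.Perm β)
    (hsym : ∀ u₁ u₂, G.Adj u₁ u₂ → φ u₂ u₁ = (φ u₁ u₂)⁻¹)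
    (Γ : Subgroup (Equiv.Perm β))
    (hφΓ : ∀ u₁ u₂, G.Adj u₁ u₂ → φ u₁ u₂ ∈ Γ)
    (M : Matrix β β ℂ) (hM : IsUnit M.det)
    (d : Equiv.Perm β → β → ℂ)
    (hPd : ∀ γ ∈ Γ, M⁻¹ * permM γ * M = Matrix.diagonal (d γ))
    (dF : β → ℂ)
    (hAd : M⁻¹ * adjM F * M = Matrix.diagonal dF)
    (lam μ : ℂ) :
    Fpoly (bundle G F φ hsym) lam μ
      = ∏ v : β,
          Matrix.det
            ((lam + (r : ℂ) * μ - dF v) • (1 : Matrix α α ℂ)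
              - ((Matrix.of fun u₁ u₂ => if G.Adj u₁ u₂ then d (φ u₁ u₂) v else 0)
                  - μ • degM G)) := by
  have hblocks := conj_submatrix_charMatrix_bundle G F φ hsym r hreg M hM d
    (fun u₁ u₂ h => hPd _ (hφΓ u₁ u₂ h)) dF hAd lam μ
  unfold Fpoly
  -- `Fpoly` uses the classical `DecidableEq (β × α)`, the lemma the product instance.
  convert det_eq_prod_det_of_conj_submatrix_eq_diagonal _ M hM _ hblocks using 2
  ext p q
  simp [one_apply]

theorem genCharPoly_of_abelian_bundle
    {α β : Type*} [Fintype α] [Fintype β]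
    (G : SimpleGraph α) (F : SimpleGraph β)
    (r : ℕ) (hreg : ∀ v, (F.neighborSet v).ncard = r)
    (φ : α → α → Equiv.Perm β)
    (hsym : ∀ u₁ u₂, G.Adj u₁ u₂ → φ u₂ u₁ = (φ u₁ u₂)⁻¹)
    (Γ : Subgroup (Equiv.Perm β)) (hΓAut : Γ ≤ autPerm F)
    (hΓab : ∀ γ δ : Γ, γ * δ = δ * γ)
    (hφΓ : ∀ u₁ u₂, G.Adj u₁ u₂ → φ u₁ u₂ ∈ Γ)
    (M : Matrix β β ℂ) (hM : IsUnit M.det)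
    (d : Equiv.Perm β → β → ℂ)
    (hPd : ∀ γ ∈ Γ, M⁻¹ * permM γ * M = Matrix.diagonal (d γ))
    (dF : β → ℂ)
    (hAd : M⁻¹ * adjM F * M = Matrix.diagonal dF)
    (lam μ : ℂ) :
    Fpoly (bundle G F φ hsym) lam μ
      = ∏ v : β,
          Matrix.det
            ((lam + (r : ℂ) * μ - dF v) • (1 : Matrix α α ℂ)
              - ((Matrix.of fun u₁ u₂ => if G.Adj u₁ u₂ then d (φ u₁ u₂) v else 0)
                  - μ • degM G)) :=
  genCharPoly_of_abelian_bundle_general G F r hreg φ hsym Γ hφΓ M hM d hPd dF hAd lam μ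

end
end
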